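/- Let a, b ≥ 0 with (n−2)b ≥ 2a, and let A = A(n,-a,b) be the n×n matrix with -a on the diagonal and b elsewhere. For 2 ≤ p < ∞, the induced p-norm of A satisfies (n−1)b − a ≤ ‖A‖_p ≤ n^{1/2 − 1/p}((n−1)b − a). -/

import Mathlib

open scoped BigOperators ENNReal

/-- The `ℓ^p` norm of a vector in `ℝⁿ`, for `p ∈ [1, ∞]`. -/
noncomputable def vecPNorm {n : ℕ} (p : ℝ≥0∞) (x : Fin n → ℝ) : ℝ :=
  if p = ∞ then ⨆ i, |x i| else (∑ i, |x i| ^ p.toReal) ^ (1 / p.toReal)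

/-- The operator norm of a matrix acting on `(ℝⁿ, ‖·‖_p)`,
    i.e. `sup_{x ≠ 0} ‖Ax‖_p / ‖x‖_p`. -/
noncomputable def matPNorm {n : ℕ} (p : ℝ≥0∞) (A : Matrix (Fin n) (Fin n) ℝ) : ℝ :=
  sSup {r : ℝ | ∃ x : Fin n → ℝ, x ≠ 0 ∧ r = vecPNorm p (A.mulVec x) / vecPNorm p x}

/-- The circulant matrix `A(n, a, b)` with `a` on the diagonal and `b` elsewhere. -/
def circA (n : ℕ) (a b : ℝ) : Matrix (Fin n) (Fin n) ℝ :=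
  Matrix.of fun i j => if i = j then a else b

open Finset Matrix

/-!
Write `A = b J - (a + b) I`. It is symmetric with eigenvalue `(n - 1) b - a` on the constant
vectors and `-(a + b)` on their orthogonal complement; the hypothesis `(n - 2) b ≥ 2 a` says that
the first one dominates in absolute value, so `‖A‖₂ = (n - 1) b - a`. The constant vector gives the
lower bound in every `ℓ^p`, and the upper bound follows from
`‖y‖_p ≤ ‖y‖₂` and `‖x‖₂ ≤ n ^ (1/2 - 1/p) ‖x‖_p`.
-/

lemma Real.rpow_sum_le_sum_rpow {ι : Type*} (s : Finset ι) {f : ι → ℝ} (hf : ∀ i ∈ s, 0 ≤ f i)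
    {r : ℝ} (hr : 0 < r) (hr1 : r ≤ 1) : (∑ i ∈ s, f i) ^ r ≤ ∑ i ∈ s, f i ^ r := by
  classical
  induction s using Finset.induction_on with
  | empty => simp [Real.zero_rpow hr.ne']
  | insert j s hj ih =>
    rw [sum_insert hj, sum_insert hj]
    have hf' : ∀ i ∈ s, 0 ≤ f i := fun i hi => hf i (mem_insert_of_mem hi)
    calc (f j + ∑ i ∈ s, f i) ^ r ≤ f j ^ r + (∑ i ∈ s, f i) ^ r :=
          Real.rpow_add_le_add_rpow (hf j (mem_insert_self j s)) (sum_nonneg hf') hr.le hr1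
      _ ≤ f j ^ r + ∑ i ∈ s, f i ^ r := by gcongr; exact ih hf'

section VecPNorm

variable {n : ℕ}

lemma vecPNorm_ofReal {p : ℝ} (hp : 0 ≤ p) (x : Fin n → ℝ) :
    vecPNorm (ENNReal.ofReal p) x = (∑ i, |x i| ^ p) ^ (1 / p) := by
  rw [vecPNorm, if_neg ENNReal.ofReal_ne_top, ENNReal.toReal_ofReal hp]

lemma vecPNorm_ofReal_two (x : Fin n → ℝ) :
    vecPNorm (ENNReal.ofReal 2) x = √(∑ i, x i ^ 2) := by
  simp only [vecPNorm_ofReal zero_le_two, Real.rpow_two, sq_abs, Real.sqrt_eq_rpow]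

lemma vecPNorm_ofReal_pos {p : ℝ} (hp : 0 < p) {x : Fin n → ℝ} (hx : x ≠ 0) :
    0 < vecPNorm (ENNReal.ofReal p) x := by
  obtain ⟨i, hi⟩ := Function.ne_iff.mp hx
  rw [vecPNorm_ofReal hp.le]
  exact Real.rpow_pos_of_pos (sum_pos' (fun j _ => by positivity)
    ⟨i, mem_univ i, Real.rpow_pos_of_pos (abs_pos.mpr hi) p⟩) _

lemma vecPNorm_ofReal_smul {p : ℝ} (hp : 0 < p) (c : ℝ) (x : Fin n → ℝ) :
    vecPNorm (ENNReal.ofReal p) (c • x) = |c| * vecPNorm (ENNReal.ofReal p) x := by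
  simp only [vecPNorm_ofReal hp.le, Pi.smul_apply, smul_eq_mul, abs_mul,
    Real.mul_rpow (abs_nonneg c) (abs_nonneg _), ← mul_sum]
  rw [Real.mul_rpow (by positivity) (sum_nonneg fun i _ => by positivity),
    ← Real.rpow_mul (abs_nonneg c), mul_one_div_cancel hp.ne', Real.rpow_one]

lemma vecPNorm_ofReal_le_of_le {p q : ℝ} (hq : 0 < q) (hqp : q ≤ p) (x : Fin n → ℝ) :
    vecPNorm (ENNReal.ofReal p) x ≤ vecPNorm (ENNReal.ofReal q) x := by
  have hp : 0 < p := hq.trans_le hqp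
  have hsum : (∑ i, |x i| ^ p) ^ (q / p) ≤ ∑ i, |x i| ^ q := by
    refine (Real.rpow_sum_le_sum_rpow _ (fun i _ => by positivity) (by positivity)
      ((div_le_one hp).mpr hqp)).trans_eq (sum_congr rfl fun i _ => ?_)
    rw [← Real.rpow_mul (abs_nonneg _), mul_div_cancel₀ q hp.ne']
  rw [vecPNorm_ofReal hp.le, vecPNorm_ofReal hq.le]
  calc (∑ i, |x i| ^ p) ^ (1 / p) = ((∑ i, |x i| ^ p) ^ (q / p)) ^ (1 / q) := by
        rw [← Real.rpow_mul (sum_nonneg fun i _ => by positivity)]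
        congr 1
        field_simp
    _ ≤ (∑ i, |x i| ^ q) ^ (1 / q) := by gcongr

lemma vecPNorm_ofReal_le_card_rpow_mul {p q : ℝ} (hq : 0 < q) (hqp : q ≤ p) (x : Fin n → ℝ) :
    vecPNorm (ENNReal.ofReal q) x ≤
      (n : ℝ) ^ (1 / q - 1 / p) * vecPNorm (ENNReal.ofReal p) x := by
  have hp : 0 < p := hq.trans_le hqp
  have hpow : ∀ i, (|x i| ^ q) ^ (p / q) = |x i| ^ p := fun i => by
    rw [← Real.rpow_mul (abs_nonneg _), mul_div_cancel₀ p hq.ne']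
  have hsum := Real.rpow_sum_le_const_mul_sum_rpow univ (fun i => |x i| ^ q)
    ((one_le_div hq).mpr hqp)
  simp only [abs_of_nonneg (Real.rpow_nonneg (abs_nonneg _) q), hpow, card_univ,
    Fintype.card_fin] at hsum
  rw [vecPNorm_ofReal hp.le, vecPNorm_ofReal hq.le]
  have hS : 0 ≤ ∑ i, |x i| ^ q := sum_nonneg fun i _ => by positivity
  calc (∑ i, |x i| ^ q) ^ (1 / q) = ((∑ i, |x i| ^ q) ^ (p / q)) ^ (1 / p) := by
        rw [← Real.rpow_mul hS]
        congr 1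
        field_simp
    _ ≤ ((n : ℝ) ^ (p / q - 1) * ∑ i, |x i| ^ p) ^ (1 / p) := by gcongr
    _ = (n : ℝ) ^ (1 / q - 1 / p) * (∑ i, |x i| ^ p) ^ (1 / p) := by
        rw [Real.mul_rpow (by positivity) (sum_nonneg fun i _ => by positivity),
          ← Real.rpow_mul n.cast_nonneg]
        congr 2
        field_simp

end VecPNorm

section MatPNorm

variable {n : ℕ} {p : ℝ} {A : Matrix (Fin n) (Fin n) ℝ} {K : ℝ}

lemma matPNorm_le_of_forall (hp : 0 < p) (hK : 0 ≤ K)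
    (hA : ∀ x, vecPNorm (ENNReal.ofReal p) (A *ᵥ x) ≤ K * vecPNorm (ENNReal.ofReal p) x) :
    matPNorm (ENNReal.ofReal p) A ≤ K := by
  refine Real.sSup_le ?_ hK
  rintro r ⟨x, hx, rfl⟩
  exact (div_le_iff₀ (vecPNorm_ofReal_pos hp hx)).mpr (hA x)

lemma abs_le_matPNorm_of_mulVec_eq_smul (hp : 0 < p)
    (hA : ∀ x, vecPNorm (ENNReal.ofReal p) (A *ᵥ x) ≤ K * vecPNorm (ENNReal.ofReal p) x)
    {c : ℝ} {x : Fin n → ℝ} (hx : x ≠ 0) (hAx : A *ᵥ x = c • x) :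
    |c| ≤ matPNorm (ENNReal.ofReal p) A := by
  have hbdd : BddAbove {r : ℝ | ∃ x : Fin n → ℝ, x ≠ 0 ∧
      r = vecPNorm (ENNReal.ofReal p) (A *ᵥ x) / vecPNorm (ENNReal.ofReal p) x} := by
    refine ⟨K, ?_⟩
    rintro r ⟨y, hy, rfl⟩
    exact (div_le_iff₀ (vecPNorm_ofReal_pos hp hy)).mpr (hA y)
  refine le_csSup hbdd ⟨x, hx, ?_⟩
  rw [hAx, vecPNorm_ofReal_smul hp, mul_div_cancel_right₀ _ (vecPNorm_ofReal_pos hp hx).ne']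

end MatPNorm

section CircA

variable {n : ℕ}

lemma circA_mulVec (c b : ℝ) (x : Fin n → ℝ) :
    circA n c b *ᵥ x = fun i => b * ∑ j, x j + (c - b) * x i := by
  ext i
  have hterm : ∀ j, (if i = j then c else b) * x j =
      b * x j + if i = j then (c - b) * x j else 0 := fun j => by
    split_ifs <;> ring
  simp only [Matrix.mulVec, dotProduct, circA, Matrix.of_apply, hterm, sum_add_distrib,
    ← mul_sum, sum_ite_eq, mem_univ, if_true]

lemma circA_mulVec_one (c b : ℝ) :
    circA n c b *ᵥ 1 = (((n : ℝ) - 1) * b + c) • (1 : Fin n → ℝ) := by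
  ext i
  simp only [circA_mulVec, Pi.one_apply, sum_const, card_univ, Fintype.card_fin, nsmul_eq_mul,
    Pi.smul_apply, smul_eq_mul]
  ring

lemma circA_eigenvalue_nonneg {a b : ℝ} (hb : 0 ≤ b) (hcase : 2 * a ≤ ((n : ℝ) - 2) * b) :
    0 ≤ ((n : ℝ) - 1) * b - a := by
  have : (0 : ℝ) ≤ n * b := by positivity
  linarith

lemma sum_sq_circA_mulVec_le {a b : ℝ} (hb : 0 ≤ b) (hcase : 2 * a ≤ ((n : ℝ) - 2) * b)
    (x : Fin n → ℝ) :
    ∑ i, (circA n (-a) b *ᵥ x) i ^ 2 ≤ (((n : ℝ) - 1) * b - a) ^ 2 * ∑ i, x i ^ 2 := by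
  set S := ∑ j, x j
  set T := ∑ j, x j ^ 2
  have hST : S ^ 2 ≤ n * T := by simpa using sq_sum_le_card_mul_sum_sq (s := univ) (f := x)
  have hexpand : ∑ i, (circA n (-a) b *ᵥ x) i ^ 2 =
      (a + b) ^ 2 * T + b * (n * b - 2 * (a + b)) * S ^ 2 := by
    have hterm : ∀ i, (b * S + (-a - b) * x i) ^ 2 =
        b ^ 2 * S ^ 2 + (-2 * b * (a + b) * S) * x i + (a + b) ^ 2 * x i ^ 2 := fun i => by ring
    have hentry : ∀ i, (circA n (-a) b *ᵥ x) i = b * S + (-a - b) * x i := fun i => by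
      rw [circA_mulVec]
    simp only [hentry, hterm, sum_add_distrib, ← mul_sum, sum_const, card_univ,
      Fintype.card_fin, nsmul_eq_mul]
    ring
  -- `(n-1) b - a` squared exceeds `(a + b)²` by `n b (n b - 2 (a + b))`, and `S² ≤ n T`
  have hgap : 0 ≤ b * (n * b - 2 * (a + b)) * (n * T - S ^ 2) :=
    mul_nonneg (mul_nonneg hb (by linarith)) (by linarith)
  rw [hexpand]
  nlinarith

lemma vecPNorm_ofReal_two_circA_mulVec_le {a b : ℝ} (hb : 0 ≤ b)
    (hcase : 2 * a ≤ ((n : ℝ) - 2) * b) (x : Fin n → ℝ) :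
    vecPNorm (ENNReal.ofReal 2) (circA n (-a) b *ᵥ x) ≤
      (((n : ℝ) - 1) * b - a) * vecPNorm (ENNReal.ofReal 2) x := by
  have hC := circA_eigenvalue_nonneg hb hcase
  rw [vecPNorm_ofReal_two, vecPNorm_ofReal_two, ← Real.sqrt_sq hC, ← Real.sqrt_mul (sq_nonneg _)]
  exact Real.sqrt_le_sqrt (sum_sq_circA_mulVec_le hb hcase x)

end CircA

theorem stmt_15_general (n : ℕ) (hn : 2 ≤ n) (a b : ℝ) (hb : 0 ≤ b)
    (hcase : 2 * a ≤ ((n : ℝ) - 2) * b) (p : ℝ) (hp : 2 ≤ p) :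
    ((n : ℝ) - 1) * b - a ≤ matPNorm (ENNReal.ofReal p) (circA n (-a) b) ∧
      matPNorm (ENNReal.ofReal p) (circA n (-a) b) ≤
        (n : ℝ) ^ ((1 : ℝ) / 2 - 1 / p) * (((n : ℝ) - 1) * b - a) := by
  have hp0 : 0 < p := by linarith
  have hC := circA_eigenvalue_nonneg hb hcase
  have hbound : ∀ x, vecPNorm (ENNReal.ofReal p) (circA n (-a) b *ᵥ x) ≤
      (n : ℝ) ^ ((1 : ℝ) / 2 - 1 / p) * (((n : ℝ) - 1) * b - a) *
        vecPNorm (ENNReal.ofReal p) x := fun x =>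
    calc vecPNorm (ENNReal.ofReal p) (circA n (-a) b *ᵥ x)
        ≤ vecPNorm (ENNReal.ofReal 2) (circA n (-a) b *ᵥ x) :=
          vecPNorm_ofReal_le_of_le two_pos hp _
      _ ≤ (((n : ℝ) - 1) * b - a) * vecPNorm (ENNReal.ofReal 2) x :=
          vecPNorm_ofReal_two_circA_mulVec_le hb hcase x
      _ ≤ (((n : ℝ) - 1) * b - a) *
            ((n : ℝ) ^ ((1 : ℝ) / 2 - 1 / p) * vecPNorm (ENNReal.ofReal p) x) := by
          gcongr
          exact vecPNorm_ofReal_le_card_rpow_mul two_pos hp x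
      _ = _ := by ring
  have : NeZero n := ⟨by omega⟩
  refine ⟨?_, matPNorm_le_of_forall hp0 (by positivity) hbound⟩
  have hone := abs_le_matPNorm_of_mulVec_eq_smul hp0 hbound one_ne_zero (circA_mulVec_one (-a) b)
  rwa [← sub_eq_add_neg, abs_of_nonneg hC] at hone

theorem stmt_15 (n : ℕ) (hn : 2 ≤ n) (a b : ℝ) (ha : 0 ≤ a) (hb : 0 ≤ b)
    (hcase : 2 * a ≤ ((n : ℝ) - 2) * b) (p : ℝ) (hp : 2 ≤ p) :
    ((n : ℝ) - 1) * b - a ≤ matPNorm (ENNReal.ofReal p) (circA n (-a) b) ∧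
      matPNorm (ENNReal.ofReal p) (circA n (-a) b) ≤
        (n : ℝ) ^ ((1 : ℝ) / 2 - 1 / p) * (((n : ℝ) - 1) * b - a) :=
  stmt_15_general n hn a b hb hcase p hp
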